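/- (Proposition 1) Let q(x) = CN(x; m(v), Φ(v)) be the posterior density at v, let i be an index, t > 0, and let w = v^{(i,t)}. If the evidence lower bound does not decrease, i.e. ∫_{ℂ^N} q(x) ln( p(y|x) p(x|w) / q(x) ) dx ≥ ∫_{ℂ^N} q(x) ln( p(y|x) p(x|v) / q(x) ) dx, then the evidence does not decrease: ∫_{ℂ^N} p(y|x) p(x|w) dx ≥ ∫_{ℂ^N} p(y|x) p(x|v) dx. -/

import Mathlib

open Matrix MeasureTheory

/-- `Dmat v` is the diagonal matrix with diagonal entries `v 1, …, v N`. -/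
noncomputable def Dmat {N : ℕ} (v : Fin N → ℝ) : Matrix (Fin N) (Fin N) ℂ :=
  Matrix.diagonal fun i => (v i : ℂ)

/-- `Phi A σ v = (σ⁻² AᴴA + D(v)⁻¹)⁻¹`. -/
noncomputable def Phi {M N : ℕ} (A : Matrix (Fin M) (Fin N) ℂ) (σ : ℝ) (v : Fin N → ℝ) :
    Matrix (Fin N) (Fin N) ℂ :=
  (((σ : ℂ) ^ 2)⁻¹ • (Aᴴ * A) + (Dmat v)⁻¹)⁻¹

/-- `mvec A σ y v = σ⁻² Φ(v) Aᴴ y`. -/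
noncomputable def mvec {M N : ℕ} (A : Matrix (Fin M) (Fin N) ℂ) (σ : ℝ) (y : Fin M → ℂ)
    (v : Fin N → ℝ) : Fin N → ℂ :=
  ((σ : ℂ) ^ 2)⁻¹ • (Phi A σ v *ᵥ (Aᴴ *ᵥ y))

/-- Circularly symmetric complex Gaussian density
`CN(x; μ, S) = (π^N det S)⁻¹ exp(-(x-μ)ᴴ S⁻¹ (x-μ))` (real-valued, `det S` and the
quadratic form being real for Hermitian positive definite `S`). -/
noncomputable def gaussDensity {N : ℕ} (μ : Fin N → ℂ) (S : Matrix (Fin N) (Fin N) ℂ)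
    (x : Fin N → ℂ) : ℝ :=
  (Real.pi ^ N * S.det.re)⁻¹ * Real.exp (-(star (x - μ) ⬝ᵥ (S⁻¹ *ᵥ (x - μ))).re)

/-- Likelihood `p(y|x) = (π σ²)^{-M} exp(-σ⁻² ‖y - A x‖²)`. -/
noncomputable def likelihood {M N : ℕ} (A : Matrix (Fin M) (Fin N) ℂ) (σ : ℝ) (y : Fin M → ℂ)
    (x : Fin N → ℂ) : ℝ :=
  ((Real.pi * σ ^ 2) ^ M)⁻¹ * Real.exp (-(σ ^ 2)⁻¹ * ∑ j, Complex.normSq ((y - A *ᵥ x) j))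

/-!
The joint density `f_v(x) = p(y|x) p(x|v)` is `exp` of a quadratic form in `x`; completing the
square shows that the posterior `q` is a constant multiple `r f_v`. Changing the `i`-th prior
variance from `v i` to `t` multiplies `f_v` by `exp X` with
`X(x) = log (v i / t) + (1 / v i - 1 / t) |x i|²`, so the increase of the evidence lower bound is
`∫ q X = r ∫ f_v X`. If it is nonnegative, then `1 + X ≤ exp X` gives
`∫ f_w = ∫ f_v exp X ≥ ∫ f_v (1 + X) ≥ ∫ f_v`.
-/

section

variable {α : Type*} [MeasurableSpace α] {μ : Measure α}

theorem integral_le_integral_of_integral_mul_log_div_le {f g q X : α → ℝ} {r : ℝ}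
    (hr : 0 < r) (hf : ∀ x, 0 < f x) (hq : ∀ x, q x = r * f x)
    (hg : ∀ x, g x = f x * Real.exp (X x)) (hfi : Integrable f μ)
    (hfX : Integrable (fun x => f x * X x) μ) (hgi : Integrable g μ)
    (h : ∫ x, q x * Real.log (f x / q x) ∂μ ≤ ∫ x, q x * Real.log (g x / q x) ∂μ) :
    ∫ x, f x ∂μ ≤ ∫ x, g x ∂μ := by
  have hlog_f : ∀ x, q x * Real.log (f x / q x) = -(r * Real.log r) * f x := by
    intro x
    rw [hq, div_mul_cancel_right₀ (hf x).ne', Real.log_inv]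
    ring
  have hlog_g : ∀ x, q x * Real.log (g x / q x)
      = -(r * Real.log r) * f x + r * (f x * X x) := by
    intro x
    rw [hq, hg, mul_comm r, mul_div_mul_left _ _ (hf x).ne',
      Real.log_div (Real.exp_ne_zero _) hr.ne', Real.log_exp]
    ring
  simp only [hlog_f, hlog_g] at h
  rw [integral_add (hfi.const_mul _) (hfX.const_mul _), integral_const_mul r] at h
  have hX : 0 ≤ ∫ x, f x * X x ∂μ := nonneg_of_mul_nonneg_right (by linarith) hr
  calc ∫ x, f x ∂μ ≤ ∫ x, f x ∂μ + ∫ x, f x * X x ∂μ := le_add_of_nonneg_right hX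
    _ = ∫ x, f x + f x * X x ∂μ := (integral_add hfi hfX).symm
    _ ≤ ∫ x, g x ∂μ := integral_mono (hfi.add hfX) hgi fun x => by
        simp only [hg]
        nlinarith [Real.add_one_le_exp (X x), hf x]

end

theorem dotProduct_sub_mulVec_sub_eq {R m n : Type*} [CommRing R] [StarRing R]
    [Fintype m] [Fintype n] {A : Matrix m n R} {B P : Matrix n n R} {c : R} {y : m → R}
    {μ : n → R} (hc : star c = c) (hB : B.IsHermitian) (hBAP : B = c • (Aᴴ * A) + P)
    (hBμ : B *ᵥ μ = c • (Aᴴ *ᵥ y)) (x : n → R) :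
    c * (star (y - A *ᵥ x) ⬝ᵥ (y - A *ᵥ x)) + star x ⬝ᵥ (P *ᵥ x)
      = star (x - μ) ⬝ᵥ (B *ᵥ (x - μ)) + (c * (star y ⬝ᵥ y) - star μ ⬝ᵥ (B *ᵥ μ)) := by
  have hμB : ∀ z, star μ ⬝ᵥ (B *ᵥ z) = c * (star y ⬝ᵥ (A *ᵥ z)) := fun z => by
    rw [dotProduct_mulVec, ← hB.eq, ← star_mulVec, hBμ, star_smul, hc, star_mulVec,
      conjTranspose_conjTranspose, smul_dotProduct, smul_eq_mul, ← dotProduct_mulVec]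
  have hBμ' : ∀ z, star z ⬝ᵥ (B *ᵥ μ) = c * (star (A *ᵥ z) ⬝ᵥ y) := fun z => by
    rw [hBμ, dotProduct_smul, smul_eq_mul, dotProduct_mulVec, ← star_mulVec]
  have hBx : star x ⬝ᵥ (B *ᵥ x) = c * (star (A *ᵥ x) ⬝ᵥ (A *ᵥ x)) + star x ⬝ᵥ (P *ᵥ x) := by
    rw [hBAP, add_mulVec, dotProduct_add, smul_mulVec, dotProduct_smul, smul_eq_mul,
      ← mulVec_mulVec, dotProduct_mulVec (star x) Aᴴ, ← star_mulVec]
  simp only [mulVec_sub, star_sub, sub_dotProduct, dotProduct_sub, hμB, hBμ', hBx]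
  ring

theorem re_dotProduct_star_self {n : Type*} [Fintype n] (u : n → ℂ) :
    (star u ⬝ᵥ u).re = ∑ j, Complex.normSq (u j) := by
  simp [dotProduct, Complex.normSq_apply]

open ComplexOrder in
theorem Matrix.PosDef.re_det_pos {n : Type*} [Fintype n] [DecidableEq n] {S : Matrix n n ℂ}
    (hS : S.PosDef) : 0 < S.det.re :=
  (Complex.pos_iff.mp hS.det_pos).1

theorem continuous_gaussDensity {N : ℕ} (μ : Fin N → ℂ) (S : Matrix (Fin N) (Fin N) ℂ) :
    Continuous (gaussDensity μ S) := by
  unfold gaussDensity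
  simp only [dotProduct, mulVec]
  fun_prop

noncomputable def scalarGaussDensity (s : ℝ) (z : ℂ) : ℝ :=
  (Real.pi * s)⁻¹ * Real.exp (-(Complex.normSq z / s))

theorem scalarGaussDensity_pos {s : ℝ} (hs : 0 < s) (z : ℂ) : 0 < scalarGaussDensity s z := by
  unfold scalarGaussDensity
  have := Real.pi_pos
  positivity

theorem integrable_scalarGaussDensity {s : ℝ} (hs : 0 < s) :
    Integrable (scalarGaussDensity s) := by
  have hb : 0 < s⁻¹ := inv_pos.mpr hs
  have hexp : Integrable fun z : ℂ => Real.exp (-s⁻¹ * ‖z‖ ^ 2) := by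
    refine Integrable.of_integral_ne_zero ?_
    rw [GaussianFourier.integral_rexp_neg_mul_sq_norm hb]
    exact (Real.rpow_pos_of_pos (div_pos Real.pi_pos hb) _).ne'
  convert hexp.const_mul (Real.pi * s)⁻¹ using 3 with z
  rw [scalarGaussDensity, Complex.sq_norm, div_eq_inv_mul, neg_mul]

theorem scalarGaussDensity_eq_mul_exp {s t : ℝ} (hs : 0 < s) (ht : 0 < t) (z : ℂ) :
    scalarGaussDensity t z
      = scalarGaussDensity s z * Real.exp (Real.log (s / t) + (s⁻¹ - t⁻¹) * Complex.normSq z) := by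
  have hexp : -(Complex.normSq z / t)
      = -(Complex.normSq z / s) + (s⁻¹ - t⁻¹) * Complex.normSq z := by
    ring
  rw [scalarGaussDensity, scalarGaussDensity, Real.exp_add, Real.exp_log (div_pos hs ht), hexp,
    Real.exp_add]
  field_simp

section Prior

variable {N : ℕ} {v : Fin N → ℝ}

theorem inv_Dmat (hv : ∀ j, v j ≠ 0) : (Dmat v)⁻¹ = diagonal fun j => (((v j)⁻¹ : ℝ) : ℂ) :=
  inv_eq_right_inv <| by
    rw [Dmat, diagonal_mul_diagonal, ← diagonal_one]
    congr 1
    funext j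
    rw [← Complex.ofReal_mul, mul_inv_cancel₀ (hv j), Complex.ofReal_one]

theorem gaussDensity_zero_Dmat (hv : ∀ j, v j ≠ 0) (x : Fin N → ℂ) :
    gaussDensity 0 (Dmat v) x = ∏ j, scalarGaussDensity (v j) (x j) := by
  have hdet : (Dmat v).det.re = ∏ j, v j := by
    rw [Dmat, det_diagonal, ← Complex.ofReal_prod, Complex.ofReal_re]
  have hquad : (star x ⬝ᵥ ((Dmat v)⁻¹ *ᵥ x)).re = ∑ j, Complex.normSq (x j) / v j := by
    simp only [inv_Dmat hv, dotProduct, mulVec_diagonal, Complex.re_sum, Pi.star_apply,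
      Complex.star_def, Complex.mul_re, Complex.ofReal_re, Complex.ofReal_im, Complex.conj_re,
      Complex.conj_im, Complex.mul_im, Complex.normSq_apply]
    exact Finset.sum_congr rfl fun j _ => by ring
  simp only [gaussDensity, sub_zero, hdet, hquad, scalarGaussDensity, Finset.prod_mul_distrib,
    Finset.prod_inv_distrib, Finset.prod_const, Finset.card_univ, Fintype.card_fin, ← Real.exp_sum,
    Finset.sum_neg_distrib]

theorem gaussDensity_zero_Dmat_pos (hv : ∀ j, 0 < v j) (x : Fin N → ℂ) :
    0 < gaussDensity 0 (Dmat v) x := by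
  rw [gaussDensity_zero_Dmat fun j => (hv j).ne']
  exact Finset.prod_pos fun j _ => scalarGaussDensity_pos (hv j) _

theorem integrable_gaussDensity_zero_Dmat (hv : ∀ j, 0 < v j) :
    Integrable (gaussDensity 0 (Dmat v)) := by
  rw [funext (gaussDensity_zero_Dmat fun j => (hv j).ne')]
  exact Integrable.fintype_prod (f := fun j => scalarGaussDensity (v j))
    fun j => integrable_scalarGaussDensity (hv j)

theorem update_pos (hv : ∀ j, 0 < v j) (i : Fin N) {t : ℝ} (ht : 0 < t) :
    ∀ j, 0 < Function.update v i t j :=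
  (Function.forall_update_iff v fun _ s => 0 < s).2 ⟨ht, fun j _ => hv j⟩

theorem gaussDensity_zero_Dmat_update (hv : ∀ j, 0 < v j) (i : Fin N) {t : ℝ} (ht : 0 < t)
    (x : Fin N → ℂ) :
    gaussDensity 0 (Dmat (Function.update v i t)) x
      = gaussDensity 0 (Dmat v) x
        * Real.exp (Real.log (v i / t) + ((v i)⁻¹ - t⁻¹) * Complex.normSq (x i)) := by
  rw [gaussDensity_zero_Dmat fun j => (update_pos hv i ht j).ne',
    gaussDensity_zero_Dmat fun j => (hv j).ne', Fintype.prod_eq_mul_prod_compl i,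
    Fintype.prod_eq_mul_prod_compl i, Function.update_self, scalarGaussDensity_eq_mul_exp (hv i) ht,
    Finset.prod_congr rfl fun j hj => by
      rw [Function.update_of_ne (Finset.mem_compl.mp hj ∘ Finset.mem_singleton.mpr)]]
  ring

end Prior

section Joint

variable {M N : ℕ} (A : Matrix (Fin M) (Fin N) ℂ) (σ : ℝ) (y : Fin M → ℂ) {v : Fin N → ℝ}

noncomputable def jointDensity (v : Fin N → ℝ) (x : Fin N → ℂ) : ℝ :=
  likelihood A σ y x * gaussDensity 0 (Dmat v) x

theorem continuous_likelihood : Continuous (likelihood A σ y) := by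
  unfold likelihood
  simp only [Pi.sub_apply, mulVec, dotProduct]
  fun_prop

theorem likelihood_nonneg (x : Fin N → ℂ) : 0 ≤ likelihood A σ y x := by
  unfold likelihood
  have := Real.pi_pos
  positivity

theorem likelihood_pos (hσ : σ ≠ 0) (x : Fin N → ℂ) : 0 < likelihood A σ y x := by
  unfold likelihood
  have := Real.pi_pos
  positivity

theorem likelihood_le (x : Fin N → ℂ) : likelihood A σ y x ≤ ((Real.pi * σ ^ 2) ^ M)⁻¹ := by
  refine mul_le_of_le_one_right (by have := Real.pi_pos; positivity) (Real.exp_le_one_iff.mpr ?_)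
  exact mul_nonpos_of_nonpos_of_nonneg (neg_nonpos.mpr (by positivity))
    (Finset.sum_nonneg fun j _ => Complex.normSq_nonneg _)

theorem jointDensity_nonneg (hv : ∀ j, 0 < v j) (x : Fin N → ℂ) :
    0 ≤ jointDensity A σ y v x :=
  mul_nonneg (likelihood_nonneg A σ y x) (gaussDensity_zero_Dmat_pos hv x).le

theorem jointDensity_pos (hσ : σ ≠ 0) (hv : ∀ j, 0 < v j) (x : Fin N → ℂ) :
    0 < jointDensity A σ y v x :=
  mul_pos (likelihood_pos A σ y hσ x) (gaussDensity_zero_Dmat_pos hv x)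

theorem jointDensity_update (hv : ∀ j, 0 < v j) (i : Fin N) {t : ℝ} (ht : 0 < t)
    (x : Fin N → ℂ) :
    jointDensity A σ y (Function.update v i t) x
      = jointDensity A σ y v x
        * Real.exp (Real.log (v i / t) + ((v i)⁻¹ - t⁻¹) * Complex.normSq (x i)) := by
  rw [jointDensity, jointDensity, gaussDensity_zero_Dmat_update hv i ht, mul_assoc]

theorem continuous_jointDensity : Continuous (jointDensity A σ y v) :=
  (continuous_likelihood A σ y).mul (continuous_gaussDensity 0 _)

theorem integrable_jointDensity (hv : ∀ j, 0 < v j) : Integrable (jointDensity A σ y v) :=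
  (integrable_gaussDensity_zero_Dmat hv).bdd_mul (continuous_likelihood A σ y).aestronglyMeasurable
    (ae_of_all _ fun x => by
      rw [Real.norm_of_nonneg (likelihood_nonneg A σ y x)]
      exact likelihood_le A σ y x)

theorem integrable_jointDensity_mul_normSq (hv : ∀ j, 0 < v j) (i : Fin N) :
    Integrable fun x => jointDensity A σ y v x * Complex.normSq (x i) := by
  have hvi := hv i
  -- dominated by the joint density with the `i`-th variance doubled, as `s ≤ 2 v e^{s / (2 v)}`
  refine ((integrable_jointDensity A σ y (update_pos hv i (by positivity : 0 < 2 * v i))).const_mul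
    (4 * v i)).mono' ((continuous_jointDensity A σ y).mul
      (Complex.continuous_normSq.comp (continuous_apply i))).aestronglyMeasurable
    (ae_of_all _ fun x => ?_)
  have hf := jointDensity_nonneg A σ y hv x
  set s := Complex.normSq (x i)
  have hexp : Real.log (v i / (2 * v i)) + ((v i)⁻¹ - (2 * v i)⁻¹) * s
      = s / (2 * v i) - Real.log 2 := by
    rw [div_mul_cancel_right₀ hvi.ne', Real.log_inv]
    field_simp
    ring
  have hs : s ≤ 2 * v i * Real.exp (s / (2 * v i)) :=
    calc s = 2 * v i * (s / (2 * v i)) := by field_simp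
      _ ≤ 2 * v i * Real.exp (s / (2 * v i)) := by
        gcongr
        linarith [Real.add_one_le_exp (s / (2 * v i))]
  rw [Real.norm_of_nonneg (mul_nonneg hf (Complex.normSq_nonneg _)),
    jointDensity_update A σ y hv i (by positivity), hexp, Real.exp_sub, Real.exp_log two_pos]
  calc jointDensity A σ y v x * s
      ≤ jointDensity A σ y v x * (2 * v i * Real.exp (s / (2 * v i))) :=
        mul_le_mul_of_nonneg_left hs hf
    _ = 4 * v i * (jointDensity A σ y v x * (Real.exp (s / (2 * v i)) / 2)) := by ring

end Joint

section Posterior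

open scoped ComplexOrder

variable {M N : ℕ} (A : Matrix (Fin M) (Fin N) ℂ) (σ : ℝ) (y : Fin M → ℂ) {v : Fin N → ℝ}

theorem posDef_Dmat (hv : ∀ j, 0 < v j) : (Dmat v).PosDef :=
  PosDef.diagonal fun j => by exact_mod_cast hv j

theorem posDef_smul_conjTranspose_mul_self_add_inv_Dmat (hv : ∀ j, 0 < v j) :
    (((σ : ℂ) ^ 2)⁻¹ • (Aᴴ * A) + (Dmat v)⁻¹).PosDef := by
  have hc : (0 : ℂ) ≤ ((σ : ℂ) ^ 2)⁻¹ := by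
    rw [← Complex.ofReal_pow, ← Complex.ofReal_inv]
    exact_mod_cast inv_nonneg.mpr (sq_nonneg σ)
  exact PosDef.posSemidef_add ((posSemidef_conjTranspose_mul_self A).smul hc) (posDef_Dmat hv).inv

theorem inv_Phi (hv : ∀ j, 0 < v j) :
    (Phi A σ v)⁻¹ = ((σ : ℂ) ^ 2)⁻¹ • (Aᴴ * A) + (Dmat v)⁻¹ :=
  nonsing_inv_nonsing_inv _
    ((posDef_smul_conjTranspose_mul_self_add_inv_Dmat A σ hv).isUnit.map detMonoidHom)

theorem posDef_Phi (hv : ∀ j, 0 < v j) : (Phi A σ v).PosDef :=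
  (posDef_smul_conjTranspose_mul_self_add_inv_Dmat A σ hv).inv

theorem inv_Phi_mulVec_mvec (hv : ∀ j, 0 < v j) :
    (Phi A σ v)⁻¹ *ᵥ mvec A σ y v = ((σ : ℂ) ^ 2)⁻¹ • (Aᴴ *ᵥ y) := by
  rw [mvec, mulVec_smul, mulVec_mulVec,
    nonsing_inv_mul _ ((posDef_Phi A σ hv).isUnit.map detMonoidHom), one_mulVec]

theorem exists_exponent_eq_posterior_exponent_add_const (hv : ∀ j, 0 < v j) :
    ∃ κ : ℝ, ∀ x : Fin N → ℂ,
      (σ ^ 2)⁻¹ * ∑ j, Complex.normSq ((y - A *ᵥ x) j) + (star x ⬝ᵥ ((Dmat v)⁻¹ *ᵥ x)).re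
        = (star (x - mvec A σ y v) ⬝ᵥ ((Phi A σ v)⁻¹ *ᵥ (x - mvec A σ y v))).re + κ := by
  have hc : ((σ : ℂ) ^ 2)⁻¹ = (((σ ^ 2)⁻¹ : ℝ) : ℂ) := by push_cast; rfl
  refine ⟨((((σ ^ 2)⁻¹ : ℝ) : ℂ) * (star y ⬝ᵥ y)
      - star (mvec A σ y v) ⬝ᵥ ((Phi A σ v)⁻¹ *ᵥ mvec A σ y v)).re, fun x => ?_⟩
  have h := congrArg Complex.re <|
    dotProduct_sub_mulVec_sub_eq (by rw [hc]; exact Complex.conj_ofReal _)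
      (posDef_Phi A σ hv).inv.isHermitian (inv_Phi A σ hv) (inv_Phi_mulVec_mvec A σ y hv) x
  rwa [Complex.add_re, hc, Complex.re_ofReal_mul, re_dotProduct_star_self, Complex.add_re] at h

theorem exists_gaussDensity_posterior_eq_mul_jointDensity (hσ : σ ≠ 0) (hv : ∀ j, 0 < v j) :
    ∃ r > 0, ∀ x,
      gaussDensity (mvec A σ y v) (Phi A σ v) x = r * jointDensity A σ y v x := by
  obtain ⟨κ, hκ⟩ := exists_exponent_eq_posterior_exponent_add_const A σ y hv
  have hD := (posDef_Dmat hv).re_det_pos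
  have hΦ := (posDef_Phi A σ hv).re_det_pos
  set K := ((Real.pi * σ ^ 2) ^ M)⁻¹ * (Real.pi ^ N * (Dmat v).det.re)⁻¹ * Real.exp (-κ)
    * (Real.pi ^ N * (Phi A σ v).det.re)
  have hK : 0 < K := by positivity
  refine ⟨K⁻¹, inv_pos.mpr hK, fun x => ?_⟩
  have hexp : Real.exp (-(σ ^ 2)⁻¹ * ∑ j, Complex.normSq ((y - A *ᵥ x) j))
      * Real.exp (-(star x ⬝ᵥ ((Dmat v)⁻¹ *ᵥ x)).re)
      = Real.exp (-κ) * Real.exp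
          (-(star (x - mvec A σ y v) ⬝ᵥ ((Phi A σ v)⁻¹ *ᵥ (x - mvec A σ y v))).re) := by
    rw [← Real.exp_add, ← Real.exp_add]
    congr 1
    linarith [hκ x]
  rw [eq_inv_mul_iff_mul_eq₀ hK.ne', eq_comm]
  simp only [jointDensity, likelihood, gaussDensity, sub_zero, K]
  rw [mul_mul_mul_comm, hexp]
  field_simp

end Posterior

theorem stmt7_general (M N : ℕ) (A : Matrix (Fin M) (Fin N) ℂ)
    (y : Fin M → ℂ) (σ : ℝ) (hσ : 0 < σ) (v : Fin N → ℝ) (hv : ∀ i, 0 < v i)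
    (i : Fin N) (t : ℝ) (ht : 0 < t)
    (helbo : (∫ x : Fin N → ℂ,
          gaussDensity (mvec A σ y v) (Phi A σ v) x *
            Real.log (likelihood A σ y x * gaussDensity 0 (Dmat (Function.update v i t)) x /
              gaussDensity (mvec A σ y v) (Phi A σ v) x))
        ≥ ∫ x : Fin N → ℂ,
            gaussDensity (mvec A σ y v) (Phi A σ v) x *
              Real.log (likelihood A σ y x * gaussDensity 0 (Dmat v) x /
                gaussDensity (mvec A σ y v) (Phi A σ v) x)) :
    (∫ x : Fin N → ℂ, likelihood A σ y x * gaussDensity 0 (Dmat (Function.update v i t)) x)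
      ≥ ∫ x : Fin N → ℂ, likelihood A σ y x * gaussDensity 0 (Dmat v) x := by
  obtain ⟨r, hr, hq⟩ := exists_gaussDensity_posterior_eq_mul_jointDensity A σ y hσ.ne' hv
  have hfX : Integrable fun x => jointDensity A σ y v x
      * (Real.log (v i / t) + ((v i)⁻¹ - t⁻¹) * Complex.normSq (x i)) := by
    refine (((integrable_jointDensity A σ y hv).mul_const (Real.log (v i / t))).add
      ((integrable_jointDensity_mul_normSq A σ y hv i).const_mul ((v i)⁻¹ - t⁻¹))).congr
      (ae_of_all _ fun x => ?_)
    simp only [Pi.add_apply]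
    ring
  exact integral_le_integral_of_integral_mul_log_div_le hr (jointDensity_pos A σ y hσ.ne' hv) hq
    (jointDensity_update A σ y hv i ht) (integrable_jointDensity A σ y hv) hfX
    (integrable_jointDensity A σ y (update_pos hv i ht)) helbo

/-- Proposition 1: with q = CN(·; m(v), Φ(v)) and w = v^{(i,t)} (t > 0),
if the evidence lower bound does not decrease,
∫ q ln(p(y|·)p(·|w)/q) ≥ ∫ q ln(p(y|·)p(·|v)/q),
then the evidence does not decrease: ∫ p(y|·)p(·|w) ≥ ∫ p(y|·)p(·|v). -/
theorem stmt7 (M N : ℕ) (hM : 0 < M) (hN : 0 < N) (A : Matrix (Fin M) (Fin N) ℂ)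
    (y : Fin M → ℂ) (σ : ℝ) (hσ : 0 < σ) (v : Fin N → ℝ) (hv : ∀ i, 0 < v i)
    (i : Fin N) (t : ℝ) (ht : 0 < t)
    (helbo : (∫ x : Fin N → ℂ,
          gaussDensity (mvec A σ y v) (Phi A σ v) x *
            Real.log (likelihood A σ y x * gaussDensity 0 (Dmat (Function.update v i t)) x /
              gaussDensity (mvec A σ y v) (Phi A σ v) x))
        ≥ ∫ x : Fin N → ℂ,
            gaussDensity (mvec A σ y v) (Phi A σ v) x *
              Real.log (likelihood A σ y x * gaussDensity 0 (Dmat v) x /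
                gaussDensity (mvec A σ y v) (Phi A σ v) x)) :
    (∫ x : Fin N → ℂ, likelihood A σ y x * gaussDensity 0 (Dmat (Function.update v i t)) x)
      ≥ ∫ x : Fin N → ℂ, likelihood A σ y x * gaussDensity 0 (Dmat v) x :=
  stmt7_general M N A y σ hσ v hv i t ht helbo
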